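/- arXiv:1809.10953 — 2 statements merged into one kernel-verified Lean document; each statement's English description precedes it below -/
import Mathlib

section
/- Let ρ > 0, η ∈ [0,1), M ≥ 0, N ≥ 1 an integer, and let f₁, …, f_N : [0,∞) → [0,∞) be continuous functions such that for each i and all t ≥ 0, f_i(t) ≤ e^{−ρt} f_i(0) + ρ ∫₀^t e^{ρ(s−t)} ((η/N) Σ_{j=1}^N f_j(s) + M) ds. Then for all t ≥ 0, Σ_{i=1}^N f_i(t) ≤ e^{−ρ(1−η)t} Σ_{i=1}^N f_i(0) + (1 − e^{−ρ(1−η)t}) · N M/(1−η). -/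
/-!
Summing the `N` inequalities turns the system into one scalar inequality `S ≤ D` for
`S = ∑ i, f i`, where `D` is given by Duhamel's formula with source `ρ η S + ρ N M`.
Differentiating that formula, `D` has right derivative `-ρ D + ρ η S + ρ N M`, which `S ≤ D`
bounds by `-ρ (1 - η) D + ρ N M`; Grönwall's comparison principle then bounds `D`, hence `S`,
by the solution of the corresponding linear equation, which is the stated bound.
-/

open Real

theorem le_gronwallBound_of_deriv_right_le {f f' : ℝ → ℝ} {δ K ε a b : ℝ}
    (hf : ContinuousOn f (Set.Icc a b))
    (hf' : ∀ x ∈ Set.Ico a b, HasDerivWithinAt f (f' x) (Set.Ici x) x)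
    (ha : f a ≤ δ) (bound : ∀ x ∈ Set.Ico a b, f' x ≤ K * f x + ε) :
    ∀ x ∈ Set.Icc a b, f x ≤ gronwallBound δ K ε (x - a) :=
  le_gronwallBound_of_liminf_deriv_right_le hf
    (fun x hx _ hr => (hf' x hx).liminf_right_slope_le hr) ha bound

/-- Duhamel's formula `e^{-λt} c + ∫₀ᵗ e^{-λ(t-s)} g(s) ds` for the solution of
`u' = -λ u + g`, `u 0 = c`. -/
noncomputable def duhamel (lam c : ℝ) (g : ℝ → ℝ) (t : ℝ) : ℝ :=
  exp (-lam * t) * c + ∫ s in (0 : ℝ)..t, exp (lam * (s - t)) * g s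

section Duhamel

variable {lam c : ℝ} {g : ℝ → ℝ}

theorem duhamel_eq_exp_mul (lam c : ℝ) (g : ℝ → ℝ) (t : ℝ) :
    duhamel lam c g t = exp (-lam * t) * (c + ∫ s in (0 : ℝ)..t, exp (lam * s) * g s) := by
  rw [duhamel, mul_add, ← intervalIntegral.integral_const_mul]
  congr 1
  refine intervalIntegral.integral_congr fun s _ => ?_
  rw [← mul_assoc, ← exp_add]
  ring_nf

@[simp]
theorem duhamel_zero (lam c : ℝ) (g : ℝ → ℝ) : duhamel lam c g 0 = c := by
  simp [duhamel]

theorem continuousOn_duhamel {T : ℝ} (hg : ContinuousOn g (Set.Icc 0 T)) :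
    ContinuousOn (duhamel lam c g) (Set.Icc 0 T) := by
  rcases lt_or_ge T 0 with hT | hT
  · simp [Set.Icc_eq_empty_of_lt hT]
  rw [← Set.uIcc_of_le hT] at hg ⊢
  have hP := intervalIntegral.continuousOn_primitive_interval
    ((by fun_prop : ContinuousOn (fun s => exp (lam * s) * g s) _).integrableOn_compact
      isCompact_uIcc (μ := MeasureTheory.volume))
  rw [funext (duhamel_eq_exp_mul lam c g)]
  fun_prop

theorem hasDerivWithinAt_duhamel (hg : ContinuousOn g (Set.Ici 0)) {x : ℝ} (hx : 0 ≤ x) :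
    HasDerivWithinAt (duhamel lam c g) (-lam * duhamel lam c g x + g x) (Set.Ici x) x := by
  have hcont : ContinuousOn (fun s => exp (lam * s) * g s) (Set.Ici 0) := by fun_prop
  have hcont_right : ContinuousOn (fun s => exp (lam * s) * g s) (Set.Ioi x) :=
    hcont.mono fun _ hs => hx.trans (le_of_lt hs)
  have hP : HasDerivWithinAt (fun t => ∫ s in (0 : ℝ)..t, exp (lam * s) * g s)
      (exp (lam * x) * g x) (Set.Ici x) x :=
    intervalIntegral.integral_hasDerivWithinAt_right
      ((hcont.mono (by simp [Set.uIcc_of_le hx, Set.Icc_subset_Ici_self])).intervalIntegrable)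
      (hcont_right.stronglyMeasurableAtFilter_nhdsWithin measurableSet_Ioi x)
      ((hcont.continuousWithinAt hx).mono fun _ hs => hx.trans (le_of_lt hs))
  have hE : HasDerivAt (fun t => exp (-lam * t)) (exp (-lam * x) * (-lam * 1)) x :=
    ((hasDerivAt_id x).const_mul (-lam)).exp
  rw [funext (duhamel_eq_exp_mul lam c g)]
  refine (hE.hasDerivWithinAt.mul (hP.const_add c)).congr_deriv ?_
  have hcancel : exp (-lam * x) * exp (lam * x) = 1 := by rw [← exp_add]; simp
  beta_reduce
  linear_combination g x * hcancel

end Duhamel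

theorem le_gronwallBound_of_le_duhamel {u : ℝ → ℝ} {lam a b : ℝ}
    (hu : ContinuousOn u (Set.Ici 0)) (ha : 0 ≤ a)
    (h : ∀ t ≥ 0, u t ≤ duhamel lam (u 0) (fun s => a * u s + b) t) :
    ∀ t ≥ 0, u t ≤ gronwallBound (u 0) (a - lam) b t := by
  intro T hT
  have hg : ContinuousOn (fun s => a * u s + b) (Set.Ici 0) := by fun_prop
  have := le_gronwallBound_of_deriv_right_le (K := a - lam) (ε := b)
    (continuousOn_duhamel (hg.mono fun _ hs => hs.1))
    (fun x hx => hasDerivWithinAt_duhamel hg hx.1) (duhamel_zero lam (u 0) _).le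
    (fun x hx => by
      have := mul_le_mul_of_nonneg_left (h x hx.1) ha
      linarith) T ⟨hT, le_rfl⟩
  simpa only [sub_zero] using (h T hT).trans this

theorem gronwall_lyapunov_system_general (ρ η M : ℝ) (hρ : 0 < ρ) (hη0 : 0 ≤ η) (hη1 : η < 1)
    (N : ℕ) (hN : 1 ≤ N) (f : Fin N → ℝ → ℝ)
    (hfc : ∀ i, ContinuousOn (f i) (Set.Ici 0))
    (hineq : ∀ i, ∀ t ≥ (0:ℝ),
      f i t ≤ Real.exp (-ρ * t) * f i 0 +
        ρ * ∫ s in (0:ℝ)..t, Real.exp (ρ * (s - t)) * ((η / N) * ∑ j, f j s + M)) :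
    ∀ t ≥ (0:ℝ),
      ∑ i, f i t ≤ Real.exp (-ρ * (1 - η) * t) * ∑ i, f i 0 +
        (1 - Real.exp (-ρ * (1 - η) * t)) * (N * M / (1 - η)) := by
  have hN0 : (N : ℝ) ≠ 0 := by positivity
  set F : ℝ → ℝ := fun t => ∑ i, f i t
  have hsum : ∀ t ≥ (0 : ℝ), F t ≤ duhamel ρ (F 0) (fun s => ρ * η * F s + ρ * (N * M)) t := by
    intro t ht
    refine (Finset.sum_le_sum fun i _ => hineq i t ht).trans_eq ?_
    rw [Finset.sum_add_distrib, ← Finset.mul_sum, Finset.sum_const, Finset.card_univ,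
      Fintype.card_fin, nsmul_eq_mul, duhamel, ← intervalIntegral.integral_const_mul,
      ← intervalIntegral.integral_const_mul]
    congr 1
    refine intervalIntegral.integral_congr fun s _ => ?_
    simp only [F]
    field_simp
  have hK : ρ * η - ρ = -ρ * (1 - η) := by ring
  have h1η : 1 - η ≠ 0 := by linarith
  intro t ht
  have := le_gronwallBound_of_le_duhamel (continuousOn_finsetSum _ fun i _ => hfc i)
    (by positivity) hsum t ht
  rw [hK, gronwallBound_of_K_ne_0 (mul_ne_zero (neg_ne_zero.2 hρ.ne') h1η)] at this
  refine this.trans_eq ?_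
  field_simp
  ring

/-- Gronwall-type estimate for a system: if nonnegative continuous `f₁, …, f_N` on `[0,∞)`
satisfy `f_i t ≤ e^{-ρt} f_i 0 + ρ ∫₀^t e^{ρ(s-t)} ((η/N) ∑_j f_j s + M) ds` for all `i` and
`t ≥ 0`, with `ρ > 0`, `η ∈ [0,1)` and `M ≥ 0`, then
`∑_i f_i t ≤ e^{-ρ(1-η)t} ∑_i f_i 0 + (1 - e^{-ρ(1-η)t}) N M/(1-η)` for all `t ≥ 0`. -/
theorem gronwall_lyapunov_system (ρ η M : ℝ) (hρ : 0 < ρ) (hη0 : 0 ≤ η) (hη1 : η < 1)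
    (hM : 0 ≤ M) (N : ℕ) (hN : 1 ≤ N) (f : Fin N → ℝ → ℝ)
    (hfc : ∀ i, ContinuousOn (f i) (Set.Ici 0))
    (hf0 : ∀ i, ∀ t ≥ (0:ℝ), 0 ≤ f i t)
    (hineq : ∀ i, ∀ t ≥ (0:ℝ),
      f i t ≤ Real.exp (-ρ * t) * f i 0 +
        ρ * ∫ s in (0:ℝ)..t, Real.exp (ρ * (s - t)) * ((η / N) * ∑ j, f j s + M)) :
    ∀ t ≥ (0:ℝ),
      ∑ i, f i t ≤ Real.exp (-ρ * (1 - η) * t) * ∑ i, f i 0 +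
        (1 - Real.exp (-ρ * (1 - η) * t)) * (N * M / (1 - η)) :=
  gronwall_lyapunov_system_general ρ η M hρ hη0 hη1 N hN f hfc hineq
end

section
/- Let N ≥ 1 be an integer, ρ > 0, R ≥ 1, let U₁, …, U_N : ℝ → ℝ be C¹ functions with z·U_i'(z) ≥ ρ|z| whenever |z| ≥ R, and let W : ℝ^N → ℝ be C¹ with |∂_{x_j} W(x)| ≤ ρ/4 for all j and all x ∈ ℝ^N. Set U(x) = W(x) + Σ_{j=1}^N U_j(x_j). Define φ : ℝ → [0,1] by φ(s) = 1 for s ≥ 1, φ(s) = 0 for s ≤ −1, φ(s) = (1+sin(πs/2))/2 for s ∈ [−1,1]; define h : ℝ → ℝ by h(s) = |s| for |s| ≥ 1 and h(s) = (s²+1)/2 for |s| ≤ 1; and set V_i(z,w) = e^{(ρ/4) h(z)} (1 + φ(zw)) for z ∈ ℝ, w ∈ {−1,1}. Then for all x ∈ ℝ^N, y ∈ {−1,1}^N and all i with |x_i| ≥ R, y_i · (d/dz)[V_i(·, y_i)](x_i) + (y_i ∂_{x_i} U(x))₊ · (V_i(x_i, −y_i) − V_i(x_i, y_i)) ≤ −(ρ/8)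 V_i(x_i, y_i), where (·)₊ denotes the positive part. -/
/-- The interpolation function `φ`: `φ s = 1` for `s ≥ 1`, `φ s = 0` for `s ≤ -1`, and
`φ s = (1 + sin(πs/2))/2` for `s ∈ [-1,1]`. -/
noncomputable def phi (s : ℝ) : ℝ :=
  if 1 ≤ s then 1 else if s ≤ -1 then 0 else (1 + Real.sin (Real.pi * s / 2)) / 2

/-- The smoothed absolute value `h`: `h s = |s|` for `|s| ≥ 1` and `h s = (s²+1)/2` for
`|s| ≤ 1`. -/
noncomputable def hfun (s : ℝ) : ℝ :=
  if 1 ≤ |s| then |s| else (s ^ 2 + 1) / 2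

/-- The per-coordinate Lyapunov function `V_i(z,w) = e^{(ρ/4) h(z)} (1 + φ(zw))` for the
Zig-Zag process. -/
noncomputable def Vzz (ρ z w : ℝ) : ℝ :=
  Real.exp (ρ / 4 * hfun z) * (1 + phi (z * w))

/-!
Since `w = ±1` and `h` is even, `V(z, w) = V(zw, 1)`, so everything reduces to the single
variable `s = zw` with `|s| ≥ 1`. There `h(s) = |s|` and `φ` is locally constant (both pieces
glue in a `C¹` way at `±1`), hence `∂ₛ V(s, 1) = (ρ/4) sgn(s) V(s, 1)`. For `s ≥ 1` the
coordinate moves outwards, `V(s, 1) = 2 V(-s, 1)` and the flip rate is at least `ρ - ρ/4`, so the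
drift is `(ρ/4)·2E - (3ρ/4)·E = -(ρ/8) V`. For `s ≤ -1` the confining force dominates the
perturbation, the flip rate vanishes and the drift is `-(ρ/4) V`.
-/

open Set Filter

theorem hasDerivAt_of_eqOn_Icc_of_eqOn_Ici {f g k : ℝ → ℝ} {a b f' : ℝ} (hba : b < a)
    (hg : HasDerivAt g f' a) (hk : HasDerivAt k f' a) (hfg : EqOn f g (Icc b a))
    (hfk : EqOn f k (Ici a)) : HasDerivAt f f' a := by
  have hleft := hg.hasDerivWithinAt.congr hfg (hfg (right_mem_Icc.2 hba.le))
  have hright := hk.hasDerivWithinAt.congr hfk (hfk (mem_Ici.2 le_rfl))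
  refine (hleft.union hright).hasDerivAt ?_
  rw [Icc_union_Ici_eq_Ici hba.le]
  exact Ici_mem_nhds hba

theorem hfun_neg (s : ℝ) : hfun (-s) = hfun s := by
  simp [hfun]

theorem hfun_of_one_le {s : ℝ} (hs : 1 ≤ s) : hfun s = s := by
  simp [hfun, abs_of_pos (one_pos.trans_le hs), hs]

theorem hfun_of_abs_le_one {s : ℝ} (hs : |s| ≤ 1) : hfun s = (s ^ 2 + 1) / 2 := by
  rw [hfun]
  split_ifs with h
  · have h1 : |s| = 1 := le_antisymm hs h
    rw [← sq_abs, h1]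
    norm_num
  · rfl

theorem phi_of_one_le {s : ℝ} (hs : 1 ≤ s) : phi s = 1 := by
  simp [phi, hs]

theorem phi_of_le_neg_one {s : ℝ} (hs : s ≤ -1) : phi s = 0 := by
  simp [phi, hs, show ¬ 1 ≤ s by linarith]

theorem phi_of_mem_Icc {s : ℝ} (hs : s ∈ Icc (-1) 1) :
    phi s = (1 + Real.sin (Real.pi * s / 2)) / 2 := by
  rcases eq_or_lt_of_le hs.2 with rfl | h1
  · simp [phi]
  rcases eq_or_lt_of_le hs.1 with rfl | h2
  · norm_num [phi, neg_div]
  simp [phi, h1.not_ge, h2.not_ge]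

theorem phi_neg (s : ℝ) : phi (-s) = 1 - phi s := by
  rcases le_or_gt 1 s with hs | hs
  · rw [phi_of_one_le hs, phi_of_le_neg_one (by linarith)]; ring
  rcases le_or_gt s (-1) with hs' | hs'
  · rw [phi_of_le_neg_one hs', phi_of_one_le (by linarith)]; ring
  rw [phi_of_mem_Icc ⟨hs'.le, hs.le⟩, phi_of_mem_Icc ⟨by linarith, by linarith⟩, mul_neg,
    neg_div, Real.sin_neg]
  ring

theorem hasDerivAt_hfun_of_one_le {s : ℝ} (hs : 1 ≤ s) : HasDerivAt hfun 1 s := by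
  have hid : EqOn hfun id (Ici 1) := fun t ht => hfun_of_one_le ht
  rcases hs.eq_or_lt with rfl | hs
  · have hg : HasDerivAt (fun t : ℝ => (t ^ 2 + 1) / 2) 1 1 :=
      (((hasDerivAt_pow 2 (1 : ℝ)).add_const 1).div_const 2).congr_deriv (by norm_num)
    refine hasDerivAt_of_eqOn_Icc_of_eqOn_Ici zero_lt_one hg (hasDerivAt_id 1) ?_ hid
    exact fun t ht => hfun_of_abs_le_one (abs_le.2 ⟨by linarith [ht.1], ht.2⟩)
  · exact (hasDerivAt_id s).congr_of_eventuallyEq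
      (eventually_of_mem (Ioi_mem_nhds hs) fun t ht => hid (mem_Ici.2 (le_of_lt ht)))

theorem hasDerivAt_phi_of_one_le {s : ℝ} (hs : 1 ≤ s) : HasDerivAt phi 0 s := by
  have hone : EqOn phi (fun _ => 1) (Ici 1) := fun t ht => phi_of_one_le ht
  rcases hs.eq_or_lt with rfl | hs
  · have hg : HasDerivAt (fun t : ℝ => (1 + Real.sin (Real.pi * t / 2)) / 2) 0 1 :=
      (((((hasDerivAt_id (1 : ℝ)).const_mul Real.pi).div_const 2).sin.const_add 1).div_const
        2).congr_deriv (by simp)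
    exact hasDerivAt_of_eqOn_Icc_of_eqOn_Ici (b := -1) (by norm_num) hg
      (hasDerivAt_const 1 1) (fun t ht => phi_of_mem_Icc ht) hone
  · exact (hasDerivAt_const s 1).congr_of_eventuallyEq
      (eventually_of_mem (Ioi_mem_nhds hs) fun t ht => hone (mem_Ici.2 (le_of_lt ht)))

theorem hasDerivAt_hfun_of_le_neg_one {s : ℝ} (hs : s ≤ -1) : HasDerivAt hfun (-1) s := by
  have h := (hasDerivAt_hfun_of_one_le (le_neg_of_le_neg hs)).comp s (hasDerivAt_neg s)
  simpa [Function.comp_def, hfun_neg] using h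

theorem hasDerivAt_phi_of_le_neg_one {s : ℝ} (hs : s ≤ -1) : HasDerivAt phi 0 s := by
  have h := ((hasDerivAt_phi_of_one_le (le_neg_of_le_neg hs)).comp s (hasDerivAt_neg s)).const_sub 1
  simpa [Function.comp_def, phi_neg] using h

theorem Vzz_eq_Vzz_mul_one (ρ z : ℝ) {w : ℝ} (hw : |w| = 1) :
    Vzz ρ z w = Vzz ρ (z * w) 1 := by
  rcases (abs_eq zero_le_one).1 hw with rfl | rfl <;> simp [Vzz, hfun_neg]

theorem hasDerivAt_Vzz_one {ρ s c : ℝ} (hh : HasDerivAt hfun c s) (hφ : HasDerivAt phi 0 s) :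
    HasDerivAt (fun t => Vzz ρ t 1) (ρ / 4 * c * Vzz ρ s 1) s := by
  simp only [Vzz, mul_one]
  exact ((hh.const_mul (ρ / 4)).exp.mul (hφ.const_add 1)).congr_deriv (by ring)

theorem HasDerivAt.Vzz_of_abs_eq_one {ρ z w d : ℝ} (hw : |w| = 1)
    (hd : HasDerivAt (fun t => Vzz ρ t 1) d (z * w)) :
    HasDerivAt (fun t => Vzz ρ t w) (d * w) z := by
  have h := hd.comp z ((hasDerivAt_id z).mul_const w)
  simp only [Function.comp_def, id, one_mul] at h
  simpa only [← Vzz_eq_Vzz_mul_one ρ _ hw] using h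

theorem Vzz_one_drift_le {ρ s a b : ℝ} (hs : 1 ≤ |s|) (ha : |a| ≤ ρ / 4) (hb : ρ * |s| ≤ s * b) :
    ∃ d, HasDerivAt (fun t => Vzz ρ t 1) d s ∧
      d + max (a + b) 0 * (Vzz ρ (-s) 1 - Vzz ρ s 1) ≤ -(ρ / 8) * Vzz ρ s 1 := by
  have hE := Real.exp_pos (ρ / 4 * hfun s)
  obtain ⟨ha₁, ha₂⟩ := abs_le.1 ha
  rcases le_or_gt 0 s with hs0 | hs0
  · rw [abs_of_nonneg hs0] at hs hb
    have hb' : ρ ≤ b := le_of_mul_le_mul_left (by linarith) (by linarith : 0 < s)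
    refine ⟨_, hasDerivAt_Vzz_one (hasDerivAt_hfun_of_one_le hs) (hasDerivAt_phi_of_one_le hs), ?_⟩
    rw [max_eq_left (by linarith)]
    simp only [Vzz, hfun_neg, mul_one, phi_of_one_le hs, phi_of_le_neg_one (neg_le_neg hs)]
    nlinarith
  · rw [abs_of_neg hs0] at hs hb
    have hs' : s ≤ -1 := by linarith
    have hb' : b ≤ -ρ := by nlinarith
    refine ⟨_, hasDerivAt_Vzz_one (hasDerivAt_hfun_of_le_neg_one hs')
      (hasDerivAt_phi_of_le_neg_one hs'), ?_⟩
    rw [max_eq_right (by linarith)]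
    simp only [Vzz, mul_one, phi_of_le_neg_one hs']
    nlinarith

theorem hasFDerivAt_sum_apply {ι : Type*} [Fintype ι] {U : ι → ℝ → ℝ} {x : ι → ℝ}
    (hU : ∀ j, DifferentiableAt ℝ (U j) (x j)) :
    HasFDerivAt (fun v : ι → ℝ => ∑ j, U j (v j))
      (∑ j, deriv (U j) (x j) • (ContinuousLinearMap.proj j : (ι → ℝ) →L[ℝ] ℝ)) x :=
  HasFDerivAt.fun_sum fun j _ => (hU j).hasDerivAt.comp_hasFDerivAt x (hasFDerivAt_apply j x)

theorem fderiv_add_sum_apply_single {ι : Type*} [Fintype ι] [DecidableEq ι]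
    {W : (ι → ℝ) → ℝ} {U : ι → ℝ → ℝ} {x : ι → ℝ} (hW : DifferentiableAt ℝ W x)
    (hU : ∀ j, DifferentiableAt ℝ (U j) (x j)) (i : ι) :
    fderiv ℝ (fun v => W v + ∑ j, U j (v j)) x (Pi.single i 1) =
      fderiv ℝ W x (Pi.single i 1) + deriv (U i) (x i) := by
  rw [(hW.hasFDerivAt.fun_add (hasFDerivAt_sum_apply hU)).fderiv]
  simp [Pi.single_apply]

theorem zigzag_lyapunov_drift_general (N : ℕ) (ρ R : ℝ) (hR : 1 ≤ R)
    (U : Fin N → ℝ → ℝ) (hU : ∀ i, ContDiff ℝ 1 (U i))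
    (hUdrift : ∀ i z, R ≤ |z| → ρ * |z| ≤ z * deriv (U i) z)
    (W : (Fin N → ℝ) → ℝ) (hW : ContDiff ℝ 1 W)
    (hWbdd : ∀ j x, |fderiv ℝ W x (Pi.single j 1)| ≤ ρ / 4)
    (x y : Fin N → ℝ) (hy : ∀ i, y i = 1 ∨ y i = -1)
    (i : Fin N) (hxi : R ≤ |x i|) :
    ∃ d : ℝ, HasDerivAt (fun z => Vzz ρ z (y i)) d (x i) ∧
      y i * d +
          max (y i * fderiv ℝ (fun v => W v + ∑ j, U j (v j)) x (Pi.single i 1)) 0 *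
            (Vzz ρ (x i) (-(y i)) - Vzz ρ (x i) (y i)) ≤
        -(ρ / 8) * Vzz ρ (x i) (y i) := by
  have hy₁ : |y i| = 1 := by rcases hy i with h | h <;> simp [h]
  have hyy : y i * y i = 1 := by rw [← abs_mul_abs_self, hy₁, one_mul]
  have hs : |x i * y i| = |x i| := by rw [abs_mul, hy₁, mul_one]
  have hb : ρ * |x i * y i| ≤ x i * y i * (y i * deriv (U i) (x i)) := by
    rw [hs, show x i * y i * (y i * deriv (U i) (x i)) = x i * deriv (U i) (x i) * (y i * y i) by
      ring, hyy, mul_one]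
    exact hUdrift i (x i) hxi
  have ha : |y i * fderiv ℝ W x (Pi.single i 1)| ≤ ρ / 4 := by
    rw [abs_mul, hy₁, one_mul]
    exact hWbdd i x
  obtain ⟨d, hd, hdrift⟩ := Vzz_one_drift_le (hs ▸ hR.trans hxi) ha hb
  refine ⟨d * y i, hd.Vzz_of_abs_eq_one hy₁, ?_⟩
  rw [fderiv_add_sum_apply_single (hW.differentiable one_ne_zero x)
      (fun j => (hU j).differentiable one_ne_zero _) i,
    Vzz_eq_Vzz_mul_one ρ _ hy₁, Vzz_eq_Vzz_mul_one ρ _ ((abs_neg _).trans hy₁),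
    show y i * (d * y i) = d by rw [mul_left_comm, hyy, mul_one], mul_add, mul_neg]
  exact hdrift

/-- Per-coordinate Lyapunov drift inequality for the Zig-Zag sampler with potential
`U(x) = W(x) + ∑_j U_j(x_j)`: for `|x_i| ≥ R`,
`y_i ∂_z V_i(x_i, y_i) + (y_i ∂_{x_i} U(x))₊ (V_i(x_i,-y_i) - V_i(x_i,y_i))
  ≤ -(ρ/8) V_i(x_i,y_i)`. -/
theorem zigzag_lyapunov_drift (N : ℕ) (hN : 1 ≤ N) (ρ R : ℝ) (hρ : 0 < ρ) (hR : 1 ≤ R)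
    (U : Fin N → ℝ → ℝ) (hU : ∀ i, ContDiff ℝ 1 (U i))
    (hUdrift : ∀ i z, R ≤ |z| → ρ * |z| ≤ z * deriv (U i) z)
    (W : (Fin N → ℝ) → ℝ) (hW : ContDiff ℝ 1 W)
    (hWbdd : ∀ j x, |fderiv ℝ W x (Pi.single j 1)| ≤ ρ / 4)
    (x y : Fin N → ℝ) (hy : ∀ i, y i = 1 ∨ y i = -1)
    (i : Fin N) (hxi : R ≤ |x i|) :
    ∃ d : ℝ, HasDerivAt (fun z => Vzz ρ z (y i)) d (x i) ∧
      y i * d +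
          max (y i * fderiv ℝ (fun v => W v + ∑ j, U j (v j)) x (Pi.single i 1)) 0 *
            (Vzz ρ (x i) (-(y i)) - Vzz ρ (x i) (y i)) ≤
        -(ρ / 8) * Vzz ρ (x i) (y i) :=
  zigzag_lyapunov_drift_general N ρ R hR U hU hUdrift W hW hWbdd x y hy i hxi
end
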